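/- arXiv:1406.3820 — 4 statements merged into one kernel-verified Lean document; each statement's English description precedes it below -/
import Mathlib

section
/- Let Λ = ℤ^d, let p₀, p₁, p₂ ∈ (0,∞) satisfy 1/p₀ = 1/p₁ + 1/p₂, and let ω₀, ω₁, ω₂ be positive weights on Λ × Λ satisfying ω₁(j,j)·ω₂(j,k) ≤ ω₀(j,k) for all j,k ∈ Λ. If A₀ = (a(j,k)) is a matrix with ‖A₀‖ := (Σ_{j,k} |a(j,k) ω₀(j,k)|^{p₀})^{1/p₀} < ∞, then there exist matrices A₁, A₂ with A₀ = A₁·A₂ (matrix product), A₁ diagonal, and ‖A₁‖_{U^{p₁}(ω₁)} · ‖A₂‖_{U^{p₂}(ω₂)} ≤ ‖A₀‖_{U^{p₀}(ω₀)}, where ‖A‖_{U^p(ω)} := (Σ_{j,k} |a(j,k) ω(j,k)|^p)^{1/p}. -/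
/-- If `f` is nonnegative and summable and `q ≥ 1`, then `f^q` is summable and
`∑ f^q ≤ (∑ f)^q`. -/
lemma aux_tsum_rpow {ι : Type*} (f : ι → ℝ) (hf : ∀ i, 0 ≤ f i) (hs : Summable f)
    (q : ℝ) (hq : 1 ≤ q) :
    Summable (fun i => f i ^ q) ∧ (∑' i, f i ^ q) ≤ (∑' i, f i) ^ q := by
  set S := ∑' i, f i with hS
  have hS0 : 0 ≤ S := tsum_nonneg hf
  have hq0 : (0:ℝ) ≤ q - 1 := by linarith
  have key : ∀ i, f i ^ q ≤ S ^ (q - 1) * f i := by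
    intro i
    have hle : f i ≤ S := Summable.le_tsum hs i fun j _ => hf j
    rcases (hf i).eq_or_lt with h0 | hpos
    · rw [← h0, Real.zero_rpow (by linarith : q ≠ 0), mul_zero]
    · have : f i ^ q = f i ^ (q - 1) * f i := by
        rw [show q = q - 1 + 1 by ring, Real.rpow_add hpos, Real.rpow_one]
        ring_nf
      rw [this]
      exact mul_le_mul_of_nonneg_right
        (Real.rpow_le_rpow (hf i) hle hq0) (hf i)
  have hsum : Summable (fun i => f i ^ q) :=
    Summable.of_nonneg_of_le (fun i => Real.rpow_nonneg (hf i) q) key (hs.mul_left _)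
  refine ⟨hsum, ?_⟩
  calc (∑' i, f i ^ q) ≤ ∑' i, S ^ (q - 1) * f i :=
        Summable.tsum_le_tsum key hsum (hs.mul_left _)
    _ = S ^ (q - 1) * S := by rw [tsum_mul_left]
    _ = S ^ q := by
        rcases hS0.eq_or_lt with h0 | hpos
        · rw [← h0, mul_zero, Real.zero_rpow (by linarith : q ≠ 0)]
        · rw [show q = q - 1 + 1 by ring, Real.rpow_add hpos, Real.rpow_one]
          ring_nf

/-- factorization `A₀ = A₁ ⋅ A₂` of a matrix in `U^{p₀}(ω₀, ℤ^d)`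
with `A₁` diagonal, under `ω₁(j,j)·ω₂(j,k) ≤ ω₀(j,k)` and `1/p₀ = 1/p₁ + 1/p₂`,
with `‖A₁‖_{U^{p₁}(ω₁)}·‖A₂‖_{U^{p₂}(ω₂)} ≤ ‖A₀‖_{U^{p₀}(ω₀)}`. -/
theorem stmt2 (d : ℕ) (p₀ p₁ p₂ : ℝ)
    (hp₀ : 0 < p₀) (hp₁ : 0 < p₁) (hp₂ : 0 < p₂)
    (hhol : 1 / p₀ = 1 / p₁ + 1 / p₂)
    (ω₀ ω₁ ω₂ : (Fin d → ℤ) → (Fin d → ℤ) → ℝ)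
    (hω₀ : ∀ j k, 0 < ω₀ j k) (hω₁ : ∀ j k, 0 < ω₁ j k) (hω₂ : ∀ j k, 0 < ω₂ j k)
    (hw : ∀ j k, ω₁ j j * ω₂ j k ≤ ω₀ j k)
    (a : (Fin d → ℤ) → (Fin d → ℤ) → ℂ)
    (ha : Summable (fun jk : (Fin d → ℤ) × (Fin d → ℤ) =>
      (‖a jk.1 jk.2‖ * ω₀ jk.1 jk.2) ^ p₀)) :
    ∃ b c : (Fin d → ℤ) → (Fin d → ℤ) → ℂ,
      (∀ j k, j ≠ k → b j k = 0) ∧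
      (∀ j k, a j k = ∑' m, b j m * c m k) ∧
      Summable (fun jk : (Fin d → ℤ) × (Fin d → ℤ) =>
        (‖b jk.1 jk.2‖ * ω₁ jk.1 jk.2) ^ p₁) ∧
      Summable (fun jk : (Fin d → ℤ) × (Fin d → ℤ) =>
        (‖c jk.1 jk.2‖ * ω₂ jk.1 jk.2) ^ p₂) ∧
      (∑' jk : (Fin d → ℤ) × (Fin d → ℤ), (‖b jk.1 jk.2‖ * ω₁ jk.1 jk.2) ^ p₁) ^ (1 / p₁) *
        (∑' jk : (Fin d → ℤ) × (Fin d → ℤ), (‖c jk.1 jk.2‖ * ω₂ jk.1 jk.2) ^ p₂) ^ (1 / p₂) ≤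
        (∑' jk : (Fin d → ℤ) × (Fin d → ℤ), (‖a jk.1 jk.2‖ * ω₀ jk.1 jk.2) ^ p₀) ^ (1 / p₀) := by
  classical
  have hann : ∀ (j k : Fin d → ℤ), 0 ≤ ‖a j k‖ * ω₀ j k :=
    fun j k => mul_nonneg (norm_nonneg _) (hω₀ j k).le
  set t : (Fin d → ℤ) → ℝ := fun j => ∑' k, (‖a j k‖ * ω₀ j k) ^ p₀ with ht_def
  have hrow : ∀ j, Summable fun k => (‖a j k‖ * ω₀ j k) ^ p₀ := fun j => ha.prod_factor j
  have htnn : ∀ j, 0 ≤ t j := fun j => tsum_nonneg fun k => Real.rpow_nonneg (hann j k) _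
  have hann' : (0 : ((Fin d → ℤ) × (Fin d → ℤ)) → ℝ) ≤ fun jk =>
      (‖a jk.1 jk.2‖ * ω₀ jk.1 jk.2) ^ p₀ :=
    fun jk => Real.rpow_nonneg (hann jk.1 jk.2) _
  have hts : Summable t := ((summable_prod_of_nonneg hann').mp ha).2
  have haz : ∀ j k, t j = 0 → a j k = 0 := by
    intro j k h0
    have h1 : (‖a j k‖ * ω₀ j k) ^ p₀ ≤ t j :=
      Summable.le_tsum (hrow j) k fun m _ => Real.rpow_nonneg (hann j m) _
    have h2 : (‖a j k‖ * ω₀ j k) ^ p₀ = 0 :=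
      le_antisymm (h0 ▸ h1) (Real.rpow_nonneg (hann j k) _)
    have h3 : ‖a j k‖ * ω₀ j k = 0 := by
      by_contra h
      exact h ((Real.rpow_eq_zero (hann j k) hp₀.ne').mp h2)
    rcases mul_eq_zero.mp h3 with h | h
    · exact norm_eq_zero.mp h
    · exact absurd h (hω₀ j k).ne'
  -- the factorization
  set b : (Fin d → ℤ) → (Fin d → ℤ) → ℂ := fun j k =>
    if j = k then ((t j ^ (1/p₁) / ω₁ j j : ℝ) : ℂ) else 0 with hb_def
  set c : (Fin d → ℤ) → (Fin d → ℤ) → ℂ := fun j k =>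
    if t j = 0 then 0 else ((ω₁ j j * t j ^ (-(1/p₁)) : ℝ) : ℂ) * a j k with hc_def
  refine ⟨b, c, ?_, ?_, ?_⟩
  · intro j k hjk
    simp only [hb_def, if_neg hjk]
  · intro j k
    rw [tsum_eq_single j ?_]
    · by_cases h0 : t j = 0
      · simp [hc_def, if_pos h0, haz j k h0]
      · have htpos : 0 < t j := lt_of_le_of_ne (htnn j) (Ne.symm h0)
        have h1 : t j ^ (1/p₁) * t j ^ (-(1/p₁)) = 1 := by
          rw [← Real.rpow_add htpos]; simp
        have hsc : t j ^ (1/p₁) / ω₁ j j * (ω₁ j j * t j ^ (-(1/p₁))) = 1 := by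
          have hωne : ω₁ j j ≠ 0 := (hω₁ j j).ne'
          calc t j ^ (1/p₁) / ω₁ j j * (ω₁ j j * t j ^ (-(1/p₁)))
              = (t j ^ (1/p₁) * t j ^ (-(1/p₁))) * (ω₁ j j / ω₁ j j) := by ring
            _ = 1 := by rw [h1, div_self hωne, one_mul]
        simp only [hb_def, hc_def, if_pos rfl, if_neg h0]
        rw [← mul_assoc, ← Complex.ofReal_mul, hsc, Complex.ofReal_one, one_mul]
    · intro m hm
      simp [hb_def, if_neg (fun h => hm h.symm : ¬ j = m)]
  -- norm computations
  have hb_eq : ∀ jk : (Fin d → ℤ) × (Fin d → ℤ),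
      (‖b jk.1 jk.2‖ * ω₁ jk.1 jk.2) ^ p₁ = if jk.1 = jk.2 then t jk.1 else 0 := by
    rintro ⟨j, k⟩
    by_cases h : j = k
    · subst h
      simp only [hb_def, if_pos rfl, Complex.norm_real, Real.norm_eq_abs]
      rw [abs_of_nonneg (div_nonneg (Real.rpow_nonneg (htnn j) _) (hω₁ j j).le),
        div_mul_cancel₀ _ (hω₁ j j).ne', ← Real.rpow_mul (htnn j),
        one_div_mul_cancel hp₁.ne', Real.rpow_one, if_pos trivial]
    · simp only [hb_def, if_neg h, norm_zero, zero_mul, Real.zero_rpow hp₁.ne']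
  -- diagonal embedding
  have hinj : Function.Injective (fun j : Fin d → ℤ => (j, j)) := by
    intro x y h
    exact congrArg Prod.fst h
  have hsupp : ∀ x ∉ Set.range (fun j : Fin d → ℤ => ((j, j) : (Fin d → ℤ) × (Fin d → ℤ))),
      (‖b x.1 x.2‖ * ω₁ x.1 x.2) ^ p₁ = 0 := by
    rintro ⟨j, k⟩ hx
    have hjk : j ≠ k := by
      rintro rfl
      exact hx ⟨j, rfl⟩
    rw [hb_eq ⟨j, k⟩, if_neg hjk]
  have hbs : Summable (fun jk : (Fin d → ℤ) × (Fin d → ℤ) =>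
      (‖b jk.1 jk.2‖ * ω₁ jk.1 jk.2) ^ p₁) := by
    rw [← hinj.summable_iff hsupp]
    exact hts.congr fun j => ((hb_eq ⟨j, j⟩).trans (if_pos rfl)).symm
  have hbsum : (∑' jk : (Fin d → ℤ) × (Fin d → ℤ), (‖b jk.1 jk.2‖ * ω₁ jk.1 jk.2) ^ p₁)
      = ∑' j, t j := by
    rw [← hinj.tsum_eq (f := fun jk : (Fin d → ℤ) × (Fin d → ℤ) =>
      (‖b jk.1 jk.2‖ * ω₁ jk.1 jk.2) ^ p₁) ?_]
    · exact tsum_congr fun j => (hb_eq ⟨j, j⟩).trans (if_pos rfl)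
    · intro x hx
      by_contra hxr
      exact hx (hsupp x hxr)
  -- exponents
  have hq : 1 ≤ p₂ / p₀ := by
    have h12 : 1 / p₂ ≤ 1 / p₀ := by
      rw [hhol]
      have := one_div_pos.mpr hp₁
      linarith
    rw [div_le_div_iff₀ hp₂ hp₀] at h12
    rw [le_div_iff₀ hp₀]
    linarith
  have hcnn : ∀ (j k : Fin d → ℤ), 0 ≤ (‖c j k‖ * ω₂ j k) ^ p₂ :=
    fun j k => Real.rpow_nonneg (mul_nonneg (norm_nonneg _) (hω₂ j k).le) _
  have hcrow : ∀ j, Summable (fun k => (‖c j k‖ * ω₂ j k) ^ p₂) ∧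
      (∑' k, (‖c j k‖ * ω₂ j k) ^ p₂) ≤ t j := by
    intro j
    by_cases h0 : t j = 0
    · have hz : ∀ k, (‖c j k‖ * ω₂ j k) ^ p₂ = 0 := by
        intro k
        simp [hc_def, if_pos h0, Real.zero_rpow hp₂.ne']
      constructor
      · exact summable_zero.congr fun k => (hz k).symm
      · rw [tsum_congr hz, tsum_zero]
        exact htnn j
    · have htpos : 0 < t j := lt_of_le_of_ne (htnn j) (Ne.symm h0)
      set r : ℝ := t j ^ (-(1/p₁)) with hr_def
      have hr0 : 0 ≤ r := Real.rpow_nonneg (htnn j) _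
      have hcval : ∀ k, ‖c j k‖ = ω₁ j j * r * ‖a j k‖ := by
        intro k
        simp only [hc_def, if_neg h0, norm_mul, Complex.norm_real, Real.norm_eq_abs,
          abs_mul]
        rw [abs_of_nonneg (hω₁ j j).le, abs_of_nonneg (Real.rpow_nonneg (htnn j) _)]
      have key : ∀ k, (‖c j k‖ * ω₂ j k) ^ p₂ ≤
          ((‖a j k‖ * ω₀ j k) ^ p₀) ^ (p₂ / p₀) * r ^ p₂ := by
        intro k
        have h2 : ‖c j k‖ * ω₂ j k ≤ (‖a j k‖ * ω₀ j k) * r := by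
          rw [hcval k]
          calc ω₁ j j * r * ‖a j k‖ * ω₂ j k
              = (ω₁ j j * ω₂ j k * ‖a j k‖) * r := by ring
            _ ≤ (ω₀ j k * ‖a j k‖) * r :=
                mul_le_mul_of_nonneg_right
                  (mul_le_mul_of_nonneg_right (hw j k) (norm_nonneg _)) hr0
            _ = (‖a j k‖ * ω₀ j k) * r := by ring
        calc (‖c j k‖ * ω₂ j k) ^ p₂ ≤ ((‖a j k‖ * ω₀ j k) * r) ^ p₂ :=
              Real.rpow_le_rpow (mul_nonneg (norm_nonneg _) (hω₂ j k).le) h2 hp₂.le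
          _ = (‖a j k‖ * ω₀ j k) ^ p₂ * r ^ p₂ :=
              Real.mul_rpow (hann j k) hr0
          _ = ((‖a j k‖ * ω₀ j k) ^ p₀) ^ (p₂ / p₀) * r ^ p₂ := by
              rw [← Real.rpow_mul (hann j k),
                show p₀ * (p₂ / p₀) = p₂ by field_simp]
      obtain ⟨hsq, hlq⟩ := aux_tsum_rpow (fun k => (‖a j k‖ * ω₀ j k) ^ p₀)
        (fun k => Real.rpow_nonneg (hann j k) _) (hrow j) (p₂ / p₀) hq
      have hsum : Summable (fun k => (‖c j k‖ * ω₂ j k) ^ p₂) :=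
        Summable.of_nonneg_of_le (fun k => hcnn j k) key (hsq.mul_right _)
      refine ⟨hsum, ?_⟩
      calc (∑' k, (‖c j k‖ * ω₂ j k) ^ p₂)
          ≤ ∑' k, ((‖a j k‖ * ω₀ j k) ^ p₀) ^ (p₂ / p₀) * r ^ p₂ :=
            Summable.tsum_le_tsum key hsum (hsq.mul_right _)
        _ = (∑' k, ((‖a j k‖ * ω₀ j k) ^ p₀) ^ (p₂ / p₀)) * r ^ p₂ := tsum_mul_right
        _ ≤ (t j) ^ (p₂ / p₀) * r ^ p₂ :=
            mul_le_mul_of_nonneg_right hlq (Real.rpow_nonneg hr0 _)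
        _ = t j := by
            rw [hr_def, ← Real.rpow_mul (htnn j), ← Real.rpow_add htpos,
              show p₂ / p₀ + -(1 / p₁) * p₂ = 1 by
                have h1 : 1 / p₀ - 1 / p₁ = 1 / p₂ := by linarith
                calc p₂ / p₀ + -(1 / p₁) * p₂ = p₂ * (1 / p₀ - 1 / p₁) := by ring
                  _ = p₂ * (1 / p₂) := by rw [h1]
                  _ = 1 := by field_simp,
              Real.rpow_one]
  -- assemble
  have hcnn' : (0 : ((Fin d → ℤ) × (Fin d → ℤ)) → ℝ) ≤ fun jk =>
      (‖c jk.1 jk.2‖ * ω₂ jk.1 jk.2) ^ p₂ := fun jk => hcnn jk.1 jk.2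
  have hmarg : Summable (fun j => ∑' k, (‖c j k‖ * ω₂ j k) ^ p₂) :=
    Summable.of_nonneg_of_le (fun j => tsum_nonneg (hcnn j))
      (fun j => (hcrow j).2) hts
  have hcs : Summable (fun jk : (Fin d → ℤ) × (Fin d → ℤ) =>
      (‖c jk.1 jk.2‖ * ω₂ jk.1 jk.2) ^ p₂) :=
    (summable_prod_of_nonneg hcnn').mpr ⟨fun j => (hcrow j).1, hmarg⟩
  have hcle : (∑' jk : (Fin d → ℤ) × (Fin d → ℤ), (‖c jk.1 jk.2‖ * ω₂ jk.1 jk.2) ^ p₂)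
      ≤ ∑' j, t j := by
    rw [Summable.tsum_prod' hcs fun j => (hcrow j).1]
    exact Summable.tsum_le_tsum (fun j => (hcrow j).2) hmarg hts
  refine ⟨hbs, hcs, ?_⟩
  have hTprod : (∑' jk : (Fin d → ℤ) × (Fin d → ℤ), (‖a jk.1 jk.2‖ * ω₀ jk.1 jk.2) ^ p₀)
      = ∑' j, t j := Summable.tsum_prod' ha hrow
  have hT0 : 0 ≤ ∑' j, t j := tsum_nonneg fun j => htnn j
  rw [hbsum, hTprod]
  calc (∑' j, t j) ^ (1/p₁) *
        (∑' jk : (Fin d → ℤ) × (Fin d → ℤ), (‖c jk.1 jk.2‖ * ω₂ jk.1 jk.2) ^ p₂) ^ (1/p₂)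
      ≤ (∑' j, t j) ^ (1/p₁) * (∑' j, t j) ^ (1/p₂) :=
        mul_le_mul_of_nonneg_left
          (Real.rpow_le_rpow (tsum_nonneg fun jk => hcnn jk.1 jk.2) hcle
            (by positivity)) (Real.rpow_nonneg hT0 _)
    _ = (∑' j, t j) ^ (1/p₁ + 1/p₂) :=
        (Real.rpow_add' hT0 (by rw [← hhol]; exact one_div_ne_zero hp₀.ne')).symm
    _ = (∑' j, t j) ^ (1/p₀) := by rw [← hhol]
end

section
/- Let Λ = ℤ^d, p₀, p₁, p₂ ∈ (0,∞) with 1/p₀ = 1/p₁ + 1/p₂, and let ω₀, ω₁, ω₂ be weights on Λ × Λ satisfying ω₁(j,m)·ω₂(m,k) ≤ ω₀(j,k) for all j, k, m ∈ Λ. Then every matrix A₀ ∈ U^{p₀}(ω₀,Λ) factors as A₀ = A₁·A₂ with A_l ∈ U^{p_l}(ω_l,Λ), l = 1,2, and ‖A₁‖_{U^{p₁}(ω₁)}·‖A₂‖_{U^{p₂}(ω₂)} ≤ ‖A₀‖_{U^{p₀}(ω₀)}. -/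
/-- factorization `A₀ = A₁ ⋅ A₂` of a matrix in `U^{p₀}(ω₀, ℤ^d)`
under the three-index condition `ω₁(j,m)·ω₂(m,k) ≤ ω₀(j,k)` and `1/p₀ = 1/p₁ + 1/p₂`,
with `‖A₁‖_{U^{p₁}(ω₁)}·‖A₂‖_{U^{p₂}(ω₂)} ≤ ‖A₀‖_{U^{p₀}(ω₀)}`. -/
theorem stmt3 (d : ℕ) (p₀ p₁ p₂ : ℝ)
    (hp₀ : 0 < p₀) (hp₁ : 0 < p₁) (hp₂ : 0 < p₂)
    (hhol : 1 / p₀ = 1 / p₁ + 1 / p₂)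
    (ω₀ ω₁ ω₂ : (Fin d → ℤ) → (Fin d → ℤ) → ℝ)
    (hω₀ : ∀ j k, 0 < ω₀ j k) (hω₁ : ∀ j k, 0 < ω₁ j k) (hω₂ : ∀ j k, 0 < ω₂ j k)
    (hw : ∀ j k m, ω₁ j m * ω₂ m k ≤ ω₀ j k)
    (a : (Fin d → ℤ) → (Fin d → ℤ) → ℂ)
    (ha : Summable (fun jk : (Fin d → ℤ) × (Fin d → ℤ) =>
      (‖a jk.1 jk.2‖ * ω₀ jk.1 jk.2) ^ p₀)) :
    ∃ b c : (Fin d → ℤ) → (Fin d → ℤ) → ℂ,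
      (∀ j k, a j k = ∑' m, b j m * c m k) ∧
      Summable (fun jk : (Fin d → ℤ) × (Fin d → ℤ) =>
        (‖b jk.1 jk.2‖ * ω₁ jk.1 jk.2) ^ p₁) ∧
      Summable (fun jk : (Fin d → ℤ) × (Fin d → ℤ) =>
        (‖c jk.1 jk.2‖ * ω₂ jk.1 jk.2) ^ p₂) ∧
      (∑' jk : (Fin d → ℤ) × (Fin d → ℤ), (‖b jk.1 jk.2‖ * ω₁ jk.1 jk.2) ^ p₁) ^ (1 / p₁) *
        (∑' jk : (Fin d → ℤ) × (Fin d → ℤ), (‖c jk.1 jk.2‖ * ω₂ jk.1 jk.2) ^ p₂) ^ (1 / p₂) ≤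
        (∑' jk : (Fin d → ℤ) × (Fin d → ℤ), (‖a jk.1 jk.2‖ * ω₀ jk.1 jk.2) ^ p₀) ^ (1 / p₀) := by
  classical
  have hF0 : ∀ jk : (Fin d → ℤ) × (Fin d → ℤ), 0 ≤ (‖a jk.1 jk.2‖ * ω₀ jk.1 jk.2) ^ p₀ :=
    fun jk => Real.rpow_nonneg (mul_nonneg (norm_nonneg _) (hω₀ _ _).le) _
  set S : ℝ := ∑' jk : (Fin d → ℤ) × (Fin d → ℤ), (‖a jk.1 jk.2‖ * ω₀ jk.1 jk.2) ^ p₀ with hS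
  have hS0 : 0 ≤ S := tsum_nonneg hF0
  set t : (Fin d → ℤ) → ℝ := fun k => ∑' j, (‖a j k‖ * ω₀ j k) ^ p₀ with ht
  have hswap : Summable (fun kj : (Fin d → ℤ) × (Fin d → ℤ) =>
      (‖a kj.2 kj.1‖ * ω₀ kj.2 kj.1) ^ p₀) := ha.prod_symm
  have hsec : ∀ k, Summable (fun j => (‖a j k‖ * ω₀ j k) ^ p₀) := fun k => hswap.prod_factor k
  have hts : Summable t :=
    ((summable_prod_of_nonneg (fun p => hF0 (p.2, p.1))).mp hswap).2
  have ht0 : ∀ k, 0 ≤ t k := fun k => tsum_nonneg (fun j => hF0 (j, k))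
  have htS : ∑' k, t k = S := by
    have h1 : ∑' kj : (Fin d → ℤ) × (Fin d → ℤ), (‖a kj.2 kj.1‖ * ω₀ kj.2 kj.1) ^ p₀ = S := by
      rw [hS]
      exact (Equiv.prodComm (Fin d → ℤ) (Fin d → ℤ)).tsum_eq
        (fun jk => (‖a jk.1 jk.2‖ * ω₀ jk.1 jk.2) ^ p₀)
    rw [← h1, Summable.tsum_prod' hswap hsec]
  -- p₀ ≤ p₁
  have hh : p₁ * p₂ = p₀ * p₂ + p₀ * p₁ := by
    field_simp at hhol
    linarith
  have hp01 : p₀ ≤ p₁ := by nlinarith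
  have hexp : (p₁ - p₀) / p₀ = p₁ / p₂ := by
    field_simp
    nlinarith
  set γ : (Fin d → ℤ) → ℝ := fun k => t k ^ (1 / p₂) / ω₂ k k with hγ
  have hγpos : ∀ k, t k ≠ 0 → 0 < γ k := fun k h =>
    div_pos (Real.rpow_pos_of_pos ((ht0 k).lt_of_ne (Ne.symm h)) _) (hω₂ k k)
  have haz : ∀ j k, t k = 0 → a j k = 0 := by
    intro j k h
    have hle : (‖a j k‖ * ω₀ j k) ^ p₀ ≤ t k := Summable.le_tsum (hsec k) j (fun j' _ => hF0 (j', k))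
    have h0 : (‖a j k‖ * ω₀ j k) ^ p₀ = 0 := le_antisymm (h ▸ hle) (hF0 (j, k))
    have := (Real.rpow_eq_zero (mul_nonneg (norm_nonneg _) (hω₀ _ _).le) hp₀.ne').mp h0
    have hn : ‖a j k‖ = 0 := by
      rcases mul_eq_zero.mp this with h' | h'
      · exact h'
      · exact absurd h' (hω₀ j k).ne'
    exact norm_eq_zero.mp hn
  set b : (Fin d → ℤ) → (Fin d → ℤ) → ℂ :=
    fun j k => if t k = 0 then 0 else a j k / ((γ k : ℝ) : ℂ) with hb
  set c : (Fin d → ℤ) → (Fin d → ℤ) → ℂ :=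
    fun m k => if m = k then ((γ k : ℝ) : ℂ) else 0 with hc
  -- product identity
  have hprod : ∀ j k, a j k = ∑' m, b j m * c m k := by
    intro j k
    have hsingle : ∑' m, b j m * c m k = b j k * c k k :=
      tsum_eq_single k (fun m hm => by simp [hc, hm])
    rw [hsingle]
    by_cases h : t k = 0
    · simp [hb, h, haz j k h]
    · have hγk : ((γ k : ℝ) : ℂ) ≠ 0 := by
        exact_mod_cast (hγpos k h).ne'
      simp only [hb, hc, if_neg h, if_pos rfl]
      rw [div_mul_cancel₀ _ hγk]
  -- key pointwise inequality
  have key : ∀ jk : (Fin d → ℤ) × (Fin d → ℤ),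
      (‖b jk.1 jk.2‖ * ω₁ jk.1 jk.2) ^ p₁ ≤ (‖a jk.1 jk.2‖ * ω₀ jk.1 jk.2) ^ p₀ := by
    rintro ⟨j, k⟩
    simp only
    by_cases h : t k = 0
    · simp only [hb, if_pos h, norm_zero, zero_mul]
      rw [Real.zero_rpow hp₁.ne']
      exact hF0 (j, k)
    · have htk : 0 < t k := (ht0 k).lt_of_ne (Ne.symm h)
      have hγk : 0 < γ k := hγpos k h
      have hbk : ‖b j k‖ = ‖a j k‖ / γ k := by
        simp only [hb, if_neg h]
        rw [norm_div, Complex.norm_real, Real.norm_eq_abs, abs_of_pos hγk]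
      set x := ‖a j k‖ * ω₀ j k with hx
      have hx0 : 0 ≤ x := mul_nonneg (norm_nonneg _) (hω₀ _ _).le
      have hxT : x ^ p₀ ≤ t k := Summable.le_tsum (hsec k) j (fun j' _ => hF0 (j', k))
      have hT' : 0 < t k ^ (1 / p₂) := Real.rpow_pos_of_pos htk _
      have h1 : ‖b j k‖ * ω₁ j k ≤ x / t k ^ (1 / p₂) := by
        rw [le_div_iff₀ hT', hbk, hγ]
        have he : ‖a j k‖ / (t k ^ (1 / p₂) / ω₂ k k) * ω₁ j k * t k ^ (1 / p₂)
            = ‖a j k‖ * (ω₁ j k * ω₂ k k) := by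
          field_simp
        rw [he, hx]
        exact mul_le_mul_of_nonneg_left (hw j k k) (norm_nonneg _)
      have hkey2 : x ^ p₁ ≤ x ^ p₀ * t k ^ (p₁ / p₂) := by
        rcases eq_or_lt_of_le hx0 with hx' | hx'
        · rw [← hx', Real.zero_rpow hp₁.ne', Real.zero_rpow hp₀.ne', zero_mul]
        · have e1 : x ^ p₁ = x ^ p₀ * x ^ (p₁ - p₀) := by
            rw [← Real.rpow_add hx']; ring_nf
          have e2 : x ^ (p₁ - p₀) = (x ^ p₀) ^ ((p₁ - p₀) / p₀) := by
            rw [← Real.rpow_mul hx'.le]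
            congr 1
            field_simp
          have e3 : (x ^ p₀) ^ ((p₁ - p₀) / p₀) ≤ t k ^ ((p₁ - p₀) / p₀) :=
            Real.rpow_le_rpow (Real.rpow_nonneg hx'.le _) hxT
              (div_nonneg (sub_nonneg.2 hp01) hp₀.le)
          calc x ^ p₁ = x ^ p₀ * (x ^ p₀) ^ ((p₁ - p₀) / p₀) := by rw [e1, e2]
            _ ≤ x ^ p₀ * t k ^ ((p₁ - p₀) / p₀) :=
                mul_le_mul_of_nonneg_left e3 (Real.rpow_nonneg hx'.le _)
            _ = x ^ p₀ * t k ^ (p₁ / p₂) := by rw [hexp]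
      have h2 : (x / t k ^ (1 / p₂)) ^ p₁ ≤ x ^ p₀ := by
        rw [Real.div_rpow hx0 hT'.le, ← Real.rpow_mul htk.le,
          div_le_iff₀ (Real.rpow_pos_of_pos htk _)]
        have : 1 / p₂ * p₁ = p₁ / p₂ := by ring
        rw [this]
        exact hkey2
      calc (‖b j k‖ * ω₁ j k) ^ p₁ ≤ (x / t k ^ (1 / p₂)) ^ p₁ :=
            Real.rpow_le_rpow (mul_nonneg (norm_nonneg _) (hω₁ _ _).le) h1 hp₁.le
        _ ≤ x ^ p₀ := h2
  have hsumb : Summable (fun jk : (Fin d → ℤ) × (Fin d → ℤ) =>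
      (‖b jk.1 jk.2‖ * ω₁ jk.1 jk.2) ^ p₁) :=
    Summable.of_nonneg_of_le
      (fun jk => Real.rpow_nonneg (mul_nonneg (norm_nonneg _) (hω₁ _ _).le) _) key ha
  -- the c matrix
  have hgdiag : ∀ k, (‖c k k‖ * ω₂ k k) ^ p₂ = t k := by
    intro k
    have hck : ‖c k k‖ = γ k := by
      simp only [hc, if_pos rfl, Complex.norm_real, Real.norm_eq_abs]
      exact abs_of_nonneg (div_nonneg (Real.rpow_nonneg (ht0 k) _) (hω₂ k k).le)
    rw [hck, hγ]
    rw [div_mul_cancel₀ _ (hω₂ k k).ne', ← Real.rpow_mul (ht0 k)]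
    rw [one_div_mul_cancel hp₂.ne', Real.rpow_one]
  have hgoff : ∀ m k, m ≠ k → (‖c m k‖ * ω₂ m k) ^ p₂ = 0 := by
    intro m k hm
    simp only [hc, if_neg hm, norm_zero, zero_mul]
    exact Real.zero_rpow hp₂.ne'
  have hinj : Function.Injective (fun k : Fin d → ℤ => ((k, k) : (Fin d → ℤ) × (Fin d → ℤ))) :=
    fun x y h => (Prod.mk.injEq _ _ _ _ ▸ h).1
  have hsupp : ∀ p : (Fin d → ℤ) × (Fin d → ℤ),
      p ∉ Set.range (fun k : Fin d → ℤ => ((k, k) : (Fin d → ℤ) × (Fin d → ℤ))) →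
      (‖c p.1 p.2‖ * ω₂ p.1 p.2) ^ p₂ = 0 := by
    rintro ⟨m, k⟩ hp
    exact hgoff m k (fun hmk => hp ⟨m, by rw [hmk]⟩)
  have hsumc : Summable (fun jk : (Fin d → ℤ) × (Fin d → ℤ) =>
      (‖c jk.1 jk.2‖ * ω₂ jk.1 jk.2) ^ p₂) := by
    rw [← hinj.summable_iff hsupp]
    exact hts.congr (fun k => (hgdiag k).symm)
  have hCeq : (∑' jk : (Fin d → ℤ) × (Fin d → ℤ), (‖c jk.1 jk.2‖ * ω₂ jk.1 jk.2) ^ p₂) = S := by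
    rw [← hinj.tsum_eq (f := fun jk : (Fin d → ℤ) × (Fin d → ℤ) =>
      (‖c jk.1 jk.2‖ * ω₂ jk.1 jk.2) ^ p₂)]
    · rw [← htS]
      exact tsum_congr hgdiag
    · intro p hp
      by_contra h
      exact hp (hsupp p h)
  refine ⟨b, c, hprod, hsumb, hsumc, ?_⟩
  have hBle : (∑' jk : (Fin d → ℤ) × (Fin d → ℤ), (‖b jk.1 jk.2‖ * ω₁ jk.1 jk.2) ^ p₁) ≤ S :=
    Summable.tsum_le_tsum key hsumb ha
  have hB0 : 0 ≤ ∑' jk : (Fin d → ℤ) × (Fin d → ℤ), (‖b jk.1 jk.2‖ * ω₁ jk.1 jk.2) ^ p₁ :=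
    tsum_nonneg (fun jk => Real.rpow_nonneg (mul_nonneg (norm_nonneg _) (hω₁ _ _).le) _)
  rw [hCeq]
  calc (∑' jk : (Fin d → ℤ) × (Fin d → ℤ), (‖b jk.1 jk.2‖ * ω₁ jk.1 jk.2) ^ p₁) ^ (1 / p₁)
        * S ^ (1 / p₂)
      ≤ S ^ (1 / p₁) * S ^ (1 / p₂) :=
        mul_le_mul_of_nonneg_right (Real.rpow_le_rpow hB0 hBle (by positivity))
          (Real.rpow_nonneg hS0 _)
    _ = S ^ (1 / p₀) := by
        rw [← Real.rpow_add' hS0 (by rw [← hhol]; positivity)]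
        rw [← hhol]
end

section
/- Let q ∈ (0,1], and let h ∈ ℓ^q(ℤ^d) and c ∈ ℓ^p(ℤ^d) for p ∈ [q,∞]. Then the convolution h * c defined by (h*c)(j) = Σ_k h(k) c(j−k) satisfies ‖h*c‖_{ℓ^p} ≤ ‖h‖_{ℓ^q} ‖c‖_{ℓ^p}. -/
/-!
For `p ≤ 1` the `p`-triangle inequality `(∑ xᵢ) ^ p ≤ ∑ xᵢ ^ p` gives
`‖a ⋆ b‖_p ≤ ‖a‖_p ‖b‖_p`; for `p ≥ 1` Jensen's inequality for the weights `a` (Hölder against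
counting measure) gives `‖a ⋆ b‖_p ≤ ‖a‖_1 ‖b‖_p`. Either way `‖a‖_q` dominates the norm of `a`
that appears, because `ℓ^r` norms decrease in `r` and `q ≤ min p 1`.
-/

open MeasureTheory
open scoped ENNReal

namespace ENNReal

variable {ι : Type*}

theorem rpow_sum_le_sum_rpow (s : Finset ι) (x : ι → ℝ≥0∞) {r : ℝ} (hr0 : 0 < r)
    (hr1 : r ≤ 1) : (∑ i ∈ s, x i) ^ r ≤ ∑ i ∈ s, x i ^ r := by
  induction s using Finset.cons_induction with
  | empty => simp [zero_rpow_of_pos hr0]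
  | cons a s ha ih =>
    rw [Finset.sum_cons, Finset.sum_cons]
    exact (rpow_add_le_add_rpow _ _ hr0.le hr1).trans (by gcongr)

theorem rpow_tsum_le_tsum_rpow (x : ι → ℝ≥0∞) {r : ℝ} (hr0 : 0 < r) (hr1 : r ≤ 1) :
    (∑' i, x i) ^ r ≤ ∑' i, x i ^ r := by
  rw [ENNReal.tsum_eq_iSup_sum, ← le_rpow_inv_iff hr0]
  exact iSup_le fun s ↦ (le_rpow_inv_iff hr0).2 <|
    (rpow_sum_le_sum_rpow s x hr0 hr1).trans (ENNReal.sum_le_tsum s)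

theorem tsum_rpow_rpow_inv_le (x : ι → ℝ≥0∞) {s r : ℝ} (hs : 0 < s) (hsr : s ≤ r) :
    (∑' i, x i ^ r) ^ r⁻¹ ≤ (∑' i, x i ^ s) ^ s⁻¹ := by
  have hr : 0 < r := hs.trans_le hsr
  have h := rpow_tsum_le_tsum_rpow (fun i ↦ x i ^ r) (div_pos hs hr) ((div_le_one hr).2 hsr)
  simp_rw [← rpow_mul, mul_div_cancel₀ s hr.ne'] at h
  calc (∑' i, x i ^ r) ^ r⁻¹ = ((∑' i, x i ^ r) ^ (s / r)) ^ s⁻¹ := by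
        rw [← rpow_mul, div_mul_eq_mul_div, mul_inv_cancel₀ hs.ne', one_div]
    _ ≤ (∑' i, x i ^ s) ^ s⁻¹ := rpow_le_rpow h (inv_nonneg.2 hs.le)

theorem tsum_tsum_mul_sub [AddGroup ι] (f g : ι → ℝ≥0∞) :
    ∑' j, ∑' k, f k * g (j - k) = (∑' k, f k) * ∑' j, g j := by
  rw [ENNReal.tsum_comm, ← ENNReal.tsum_mul_right]
  simp_rw [ENNReal.tsum_mul_left]
  exact tsum_congr fun k ↦ congrArg _ ((Equiv.subRight k).tsum_eq g)

theorem rpow_tsum_mul_le (a x : ι → ℝ≥0∞) {r : ℝ} (hr : 1 ≤ r) :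
    (∑' k, a k * x k) ^ r ≤ (∑' k, a k) ^ (r - 1) * ∑' k, a k * x k ^ r := by
  rcases hr.eq_or_lt with rfl | hr
  · simp
  let _ : MeasurableSpace ι := ⊤
  have hr0 : 0 < r := one_pos.trans hr
  have hr1 : r - 1 ≠ 0 := (sub_pos.2 hr).ne'
  have hsplit (k : ι) : a k * x k = a k ^ ((r - 1) / r) * (a k ^ (1 / r) * x k) := by
    rw [← mul_assoc, ← rpow_add_of_nonneg _ _ (by positivity) (by positivity),
      show (r - 1) / r + 1 / r = 1 by field_simp; ring, rpow_one]
  have holder := lintegral_mul_le_Lp_mul_Lq Measure.count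
    (Real.HolderConjugate.conjExponent hr).symm
    (f := fun k ↦ a k ^ ((r - 1) / r)) (g := fun k ↦ a k ^ (1 / r) * x k)
    measurable_from_top.aemeasurable measurable_from_top.aemeasurable
  simp only [Pi.mul_apply, lintegral_count, ← tsum_congr hsplit, ← rpow_mul,
    mul_rpow_of_nonneg _ _ hr0.le, Real.conjExponent, one_div_div,
    show (r - 1) / r * (r / (r - 1)) = 1 by field_simp, one_div_mul_cancel hr0.ne',
    rpow_one] at holder
  calc (∑' k, a k * x k) ^ r
      ≤ ((∑' k, a k) ^ ((r - 1) / r) * (∑' k, a k * x k ^ r) ^ (1 / r)) ^ r := by gcongr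
    _ = (∑' k, a k) ^ (r - 1) * ∑' k, a k * x k ^ r := by
        rw [mul_rpow_of_nonneg _ _ hr0.le, ← rpow_mul, ← rpow_mul, div_mul_cancel₀ _ hr0.ne',
          one_div_mul_cancel hr0.ne', rpow_one]

variable [AddGroup ι]

theorem tsum_rpow_tsum_mul_sub_le_of_le_one (a b : ι → ℝ≥0∞) {r : ℝ} (hr0 : 0 < r)
    (hr1 : r ≤ 1) :
    ∑' j, (∑' k, a k * b (j - k)) ^ r ≤ (∑' k, a k ^ r) * ∑' j, b j ^ r :=
  calc ∑' j, (∑' k, a k * b (j - k)) ^ r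
      ≤ ∑' j, ∑' k, a k ^ r * b (j - k) ^ r := ENNReal.tsum_le_tsum fun j ↦ by
        simpa only [mul_rpow_of_nonneg _ _ hr0.le] using
          rpow_tsum_le_tsum_rpow (fun k ↦ a k * b (j - k)) hr0 hr1
    _ = (∑' k, a k ^ r) * ∑' j, b j ^ r := tsum_tsum_mul_sub (a · ^ r) (b · ^ r)

theorem tsum_rpow_tsum_mul_sub_le_of_one_le (a b : ι → ℝ≥0∞) {r : ℝ} (hr : 1 ≤ r) :
    ∑' j, (∑' k, a k * b (j - k)) ^ r ≤ (∑' k, a k) ^ r * ∑' j, b j ^ r :=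
  calc ∑' j, (∑' k, a k * b (j - k)) ^ r
      ≤ ∑' j, (∑' k, a k) ^ (r - 1) * ∑' k, a k * b (j - k) ^ r :=
        ENNReal.tsum_le_tsum fun j ↦ rpow_tsum_mul_le _ _ hr
    _ = (∑' k, a k) ^ (r - 1) * ((∑' k, a k) * ∑' j, b j ^ r) := by
        rw [ENNReal.tsum_mul_left, tsum_tsum_mul_sub a (b · ^ r)]
    _ = (∑' k, a k) ^ r * ∑' j, b j ^ r := by
        nth_rw 2 [← rpow_one (∑' k, a k)]
        rw [← mul_assoc, ← rpow_add_of_nonneg _ _ (sub_nonneg.2 hr) zero_le_one, sub_add_cancel]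

end ENNReal

namespace MeasureTheory

open ENNReal

section Count

variable {α ε : Type*} [MeasurableSpace α] [MeasurableSingletonClass α]
  [TopologicalSpace ε] [ContinuousENorm ε]

theorem eLpNorm_count_eq_tsum (f : α → ε) {p : ℝ≥0∞} (hp0 : p ≠ 0) (hp : p ≠ ∞) :
    eLpNorm f p .count = (∑' i, ‖f i‖ₑ ^ p.toReal) ^ (1 / p.toReal) := by
  rw [eLpNorm_eq_lintegral_rpow_enorm_toReal hp0 hp, lintegral_count]

theorem eLpNorm_count_le_of_le (f : α → ε) {p q : ℝ≥0∞} (hq : q ≠ 0) (hqp : q ≤ p) :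
    eLpNorm f p .count ≤ eLpNorm f q .count := by
  rcases eq_or_ne p ∞ with rfl | hp
  · rw [eLpNorm_exponent_top, eLpNormEssSup_count]
    exact iSup_le fun i ↦ enorm_le_eLpNorm_count f i hq
  rw [eLpNorm_count_eq_tsum f (hq.bot_lt.trans_le hqp).ne' hp,
    eLpNorm_count_eq_tsum f hq (ne_top_of_le_ne_top hp hqp), one_div, one_div]
  exact tsum_rpow_rpow_inv_le _ (toReal_pos hq (ne_top_of_le_ne_top hp hqp)) (toReal_mono hp hqp)

end Count

variable {ι : Type*} [AddGroup ι] [MeasurableSpace ι] [MeasurableSingletonClass ι]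

theorem eLpNorm_tsum_mul_sub_le_of_le_one (a b : ι → ℝ≥0∞) {p : ℝ≥0∞} (hp0 : p ≠ 0)
    (hp1 : p ≤ 1) :
    eLpNorm (fun j ↦ ∑' k, a k * b (j - k)) p .count ≤
      eLpNorm a p .count * eLpNorm b p .count := by
  have hp : p ≠ ∞ := ne_top_of_le_ne_top one_ne_top hp1
  simp only [eLpNorm_count_eq_tsum _ hp0 hp, enorm_eq_self]
  rw [← mul_rpow_of_nonneg _ _ (by positivity)]
  gcongr
  exact tsum_rpow_tsum_mul_sub_le_of_le_one a b (toReal_pos hp0 hp)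
    (by simpa using toReal_mono one_ne_top hp1)

theorem eLpNorm_tsum_mul_sub_le_of_one_le (a b : ι → ℝ≥0∞) {p : ℝ≥0∞} (hp : 1 ≤ p) :
    eLpNorm (fun j ↦ ∑' k, a k * b (j - k)) p .count ≤
      eLpNorm a 1 .count * eLpNorm b p .count := by
  simp only [eLpNorm_one_eq_lintegral_enorm, lintegral_count, enorm_eq_self]
  rcases eq_or_ne p ∞ with rfl | hp_top
  · simp only [eLpNorm_exponent_top, eLpNormEssSup_count, enorm_eq_self]
    refine iSup_le fun j ↦ ?_
    calc ∑' k, a k * b (j - k) ≤ ∑' k, a k * ⨆ i, b i :=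
          ENNReal.tsum_le_tsum fun k ↦ by gcongr; exact le_iSup b _
      _ = (∑' k, a k) * ⨆ i, b i := ENNReal.tsum_mul_right
  have hr : 0 < p.toReal := toReal_pos (zero_lt_one.trans_le hp).ne' hp_top
  simp only [eLpNorm_count_eq_tsum _ (zero_lt_one.trans_le hp).ne' hp_top, enorm_eq_self]
  calc (∑' j, (∑' k, a k * b (j - k)) ^ p.toReal) ^ (1 / p.toReal)
      ≤ ((∑' k, a k) ^ p.toReal * ∑' j, b j ^ p.toReal) ^ (1 / p.toReal) := by
        gcongr
        exact tsum_rpow_tsum_mul_sub_le_of_one_le a b (by simpa using toReal_mono hp_top hp)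
    _ = (∑' k, a k) * (∑' j, b j ^ p.toReal) ^ (1 / p.toReal) := by
        rw [mul_rpow_of_nonneg _ _ (by positivity), ← rpow_mul, mul_one_div_cancel hr.ne',
          rpow_one]

theorem eLpNorm_tsum_mul_sub_le (a b : ι → ℝ≥0∞) {p q : ℝ≥0∞} (hq0 : q ≠ 0) (hq1 : q ≤ 1)
    (hqp : q ≤ p) :
    eLpNorm (fun j ↦ ∑' k, a k * b (j - k)) p .count ≤
      eLpNorm a q .count * eLpNorm b p .count := by
  rcases le_total p 1 with hp1 | hp1
  · exact (eLpNorm_tsum_mul_sub_le_of_le_one a b (hq0.bot_lt.trans_le hqp).ne' hp1).trans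
      (by gcongr; exact eLpNorm_count_le_of_le a hq0 hqp)
  · exact (eLpNorm_tsum_mul_sub_le_of_one_le a b hp1).trans
      (by gcongr; exact eLpNorm_count_le_of_le a hq0 hq1)

end MeasureTheory

theorem stmt4_general (d : ℕ) (p q : ℝ≥0∞) (hq0 : 0 < q) (hq1 : q ≤ 1) (hpq : q ≤ p)
    (h c : (Fin d → ℤ) → ℂ) :
    eLpNorm (fun j => ∑' k, h k * c (j - k)) p Measure.count ≤
      eLpNorm h q Measure.count * eLpNorm c p Measure.count := by
  calc eLpNorm (fun j => ∑' k, h k * c (j - k)) p Measure.count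
      ≤ eLpNorm (fun j ↦ ∑' k, ‖h k‖ₑ * ‖c (j - k)‖ₑ) p .count :=
        eLpNorm_mono_enorm fun j ↦ by
          rw [enorm_eq_self]
          exact enorm_tsum_le_tsum_enorm.trans_eq (tsum_congr fun k ↦ enorm_mul _ _)
    _ ≤ eLpNorm (‖h ·‖ₑ) q .count * eLpNorm (‖c ·‖ₑ) p .count :=
        eLpNorm_tsum_mul_sub_le (‖h ·‖ₑ) (‖c ·‖ₑ) hq0.ne' hq1 hpq
    _ = eLpNorm h q Measure.count * eLpNorm c p Measure.count := by
        rw [eLpNorm_enorm, eLpNorm_enorm]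

/-- Young's inequality `‖h * c‖_{ℓ^p} ≤ ‖h‖_{ℓ^q} ‖c‖_{ℓ^p}` on `ℤ^d`
for `q ∈ (0,1]` and `p ∈ [q,∞]`.  Here `ℓ^p` norms are realized as `eLpNorm` with
respect to the counting measure. -/
theorem stmt4 (d : ℕ) (p q : ℝ≥0∞) (hq0 : 0 < q) (hq1 : q ≤ 1) (hpq : q ≤ p)
    (h c : (Fin d → ℤ) → ℂ)
    (hh : MemLp h q Measure.count) (hc : MemLp c p Measure.count) :
    eLpNorm (fun j => ∑' k, h k * c (j - k)) p Measure.count ≤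
      eLpNorm h q Measure.count * eLpNorm c p Measure.count :=
  stmt4_general d p q hq0 hq1 hpq h c
end

section
/- Let Λ = ℤ^d, p ∈ (0,∞], ω₁, ω₂ be weights on Λ and ω₀ a weight on Λ×Λ with ω₂(j)/ω₁(k) ≤ ω₀(j,k) for all j,k ∈ Λ. Let p' = ∞ when p ≤ 1, p' = p/(p−1) when 1 < p < ∞, and p' = 1 when p = ∞. If A ∈ U^p(ω₀,Λ), then A extends uniquely to a continuous map from ℓ^{p'}_{(ω₁)}(Λ) to ℓ^p_{(ω₂)}(Λ) with operator quasi-norm at most ‖A‖_{U^p(ω₀,Λ)}. -/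
/-!
Pointwise, `|(Af)(j)| ω₂(j) ≤ ∑ₖ |a(j,k) ω₀(j,k)| |f(k) ω₁(k)|` by the weight condition.
Hölder's inequality in `k` bounds the `j`-th term by `‖a(j,·) ω₀(j,·)‖_p ‖f ω₁‖_{p'}`; for
`p ≤ 1` this is the trivial `ℓ¹`–`ℓ^∞` pairing combined with `‖·‖_{ℓ¹} ≤ ‖·‖_{ℓ^p}`. Taking the
`ℓ^p` norm in `j` and noting that the iterated `ℓ^p` norm over `j` and `k` is the `ℓ^p` norm
over `Λ × Λ` gives the claim.
-/

open MeasureTheory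
open scoped ENNReal

theorem ENNReal.rpow_tsum_le_tsum_rpow_s5 {ι : Type*} (x : ι → ℝ≥0∞) {q : ℝ} (hq0 : 0 < q)
    (hq1 : q ≤ 1) : (∑' i, x i) ^ q ≤ ∑' i, x i ^ q := by
  have finset_le (s : Finset ι) : (∑ i ∈ s, x i) ^ q ≤ ∑ i ∈ s, x i ^ q := by
    induction s using Finset.cons_induction with
    | empty => simp [ENNReal.zero_rpow_of_pos hq0]
    | cons i s _ ih =>
      rw [Finset.sum_cons, Finset.sum_cons]
      exact (ENNReal.rpow_add_le_add_rpow _ _ hq0.le hq1).trans (by gcongr)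
  rw [← ENNReal.le_rpow_inv_iff hq0]
  refine ENNReal.summable.tsum_le_of_sum_le fun s => ?_
  rw [ENNReal.le_rpow_inv_iff hq0]
  exact (finset_le s).trans (ENNReal.sum_le_tsum s)

namespace MeasureTheory

section Count

variable {ι κ : Type*} [MeasurableSpace ι] [MeasurableSingletonClass ι]
  [MeasurableSpace κ] [MeasurableSingletonClass κ] {p : ℝ≥0∞}

theorem eLpNorm_one_count_le_of_le_one {ε : Type*} [ENorm ε] (f : κ → ε) (hp : 0 < p)
    (hp1 : p ≤ 1) : eLpNorm f 1 Measure.count ≤ eLpNorm f p Measure.count := by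
  have hptop : p ≠ ∞ := ne_top_of_le_ne_top ENNReal.one_ne_top hp1
  have hq : 0 < p.toReal := ENNReal.toReal_pos hp.ne' hptop
  have hq1 : p.toReal ≤ 1 := ENNReal.toReal_le_of_le_ofReal zero_le_one (by simpa using hp1)
  rw [eLpNorm_one_eq_lintegral_enorm, eLpNorm_eq_lintegral_rpow_enorm_toReal hp.ne' hptop,
    lintegral_count, lintegral_count, one_div, ENNReal.le_rpow_inv_iff hq]
  exact ENNReal.rpow_tsum_le_tsum_rpow_s5 _ hq hq1

theorem eLpNorm_count_mul_const (f : ι → ℝ≥0∞) (c : ℝ≥0∞) :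
    eLpNorm (fun i => f i * c) p Measure.count = eLpNorm f p Measure.count * c := by
  rcases eq_or_ne p 0 with rfl | hp0
  · simp
  rcases eq_or_ne p ∞ with rfl | hptop
  · simp only [eLpNorm_exponent_top, eLpNormEssSup_count, enorm_eq_self, ENNReal.iSup_mul]
  have hq : 0 < p.toReal := ENNReal.toReal_pos hp0 hptop
  simp only [eLpNorm_eq_lintegral_rpow_enorm_toReal hp0 hptop, lintegral_count, enorm_eq_self,
    ENNReal.mul_rpow_of_nonneg _ _ hq.le, ENNReal.tsum_mul_right]
  rw [ENNReal.mul_rpow_of_nonneg _ _ (by positivity), ← ENNReal.rpow_mul,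
    mul_one_div_cancel hq.ne', ENNReal.rpow_one]

theorem eLpNorm_count_prod {ε : Type*} [ENorm ε] (F : ι × κ → ε) :
    eLpNorm F p Measure.count =
      eLpNorm (fun i => eLpNorm (fun k => F (i, k)) p Measure.count) p Measure.count := by
  rcases eq_or_ne p 0 with rfl | hp0
  · simp
  rcases eq_or_ne p ∞ with rfl | hptop
  · simp only [eLpNorm_exponent_top, eLpNormEssSup_count, enorm_eq_self, iSup_prod]
  have hq : 0 < p.toReal := ENNReal.toReal_pos hp0 hptop
  simp only [eLpNorm_eq_lintegral_rpow_enorm_toReal hp0 hptop, lintegral_count, enorm_eq_self]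
  rw [ENNReal.tsum_prod']
  congr 2 with i
  rw [← ENNReal.rpow_mul, one_div_mul_cancel hq.ne', ENNReal.rpow_one]

variable [Countable κ] {E F : Type*} [NormedAddCommGroup E] [NormedAddCommGroup F] {p' : ℝ≥0∞}

theorem tsum_enorm_mul_le_eLpNorm_mul_eLpNorm_count (hp : 0 < p)
    (hp'1 : p ≤ 1 → p' = ∞) (hp'2 : 1 < p → p ≠ ∞ → 1 / p + 1 / p' = 1)
    (hp'3 : p = ∞ → p' = 1) (g : κ → E) (h : κ → F) :
    ∑' k, ‖g k‖ₑ * ‖h k‖ₑ ≤ eLpNorm g p Measure.count * eLpNorm h p' Measure.count := by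
  rcases le_or_gt p 1 with hp1 | hp1
  · rw [hp'1 hp1, eLpNorm_exponent_top, eLpNormEssSup_count]
    calc ∑' k, ‖g k‖ₑ * ‖h k‖ₑ ≤ ∑' k, ‖g k‖ₑ * ⨆ k, ‖h k‖ₑ := by
          gcongr with k; exact le_iSup (fun k => ‖h k‖ₑ) k
      _ = eLpNorm g 1 Measure.count * ⨆ k, ‖h k‖ₑ := by
          rw [ENNReal.tsum_mul_right, eLpNorm_one_eq_lintegral_enorm, lintegral_count]
      _ ≤ eLpNorm g p Measure.count * ⨆ k, ‖h k‖ₑ := by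
          gcongr; exact eLpNorm_one_count_le_of_le_one g hp hp1
  · have : ENNReal.HolderConjugate p p' := by
      rcases eq_or_ne p ∞ with rfl | hptop
      · rw [hp'3 rfl]; infer_instance
      · exact ENNReal.holderConjugate_iff.2 (by simpa only [one_div] using hp'2 hp1 hptop)
    calc ∑' k, ‖g k‖ₑ * ‖h k‖ₑ = eLpNorm (fun k => ‖g k‖ * ‖h k‖) 1 Measure.count := by
          simp only [eLpNorm_one_eq_lintegral_enorm, lintegral_count, enorm_mul, enorm_norm]
      _ ≤ 1 * eLpNorm g p Measure.count * eLpNorm h p' Measure.count :=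
          eLpNorm_le_eLpNorm_mul_eLpNorm_of_nnnorm .of_discrete .of_discrete
            (fun x y => ‖x‖ * ‖y‖) 1 (.of_forall fun k => by simp)
      _ = eLpNorm g p Measure.count * eLpNorm h p' Measure.count := by rw [one_mul]

theorem eLpNorm_count_tsum_enorm_mul_le (hp : 0 < p)
    (hp'1 : p ≤ 1 → p' = ∞) (hp'2 : 1 < p → p ≠ ∞ → 1 / p + 1 / p' = 1)
    (hp'3 : p = ∞ → p' = 1) (G : ι → κ → E) (h : κ → F) :
    eLpNorm (fun i => ∑' k, ‖G i k‖ₑ * ‖h k‖ₑ) p Measure.count ≤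
      eLpNorm (fun ik : ι × κ => G ik.1 ik.2) p Measure.count * eLpNorm h p' Measure.count :=
  calc eLpNorm (fun i => ∑' k, ‖G i k‖ₑ * ‖h k‖ₑ) p Measure.count
      ≤ eLpNorm (fun i => eLpNorm (G i) p Measure.count * eLpNorm h p' Measure.count) p
          Measure.count :=
        eLpNorm_mono_enorm fun i => by
          simpa only [enorm_eq_self] using
            tsum_enorm_mul_le_eLpNorm_mul_eLpNorm_count hp hp'1 hp'2 hp'3 (G i) h
    _ = _ := by rw [eLpNorm_count_mul_const, eLpNorm_count_prod]

end Count

end MeasureTheory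

theorem enorm_tsum_mul_mul_le {κ 𝕜 : Type*} [NormedDivisionRing 𝕜] (a f w₀ w₁ : κ → 𝕜) (w₂ : 𝕜)
    (hw : ∀ k, ‖w₂‖ₑ ≤ ‖w₀ k‖ₑ * ‖w₁ k‖ₑ) :
    ‖(∑' k, a k * f k) * w₂‖ₑ ≤ ∑' k, ‖a k * w₀ k‖ₑ * ‖f k * w₁ k‖ₑ :=
  calc ‖(∑' k, a k * f k) * w₂‖ₑ ≤ (∑' k, ‖a k * f k‖ₑ) * ‖w₂‖ₑ := by
        rw [enorm_mul]; gcongr; exact enorm_tsum_le_tsum_enorm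
    _ = ∑' k, ‖a k‖ₑ * ‖f k‖ₑ * ‖w₂‖ₑ := by simp only [ENNReal.tsum_mul_right, enorm_mul]
    _ ≤ ∑' k, ‖a k‖ₑ * ‖f k‖ₑ * (‖w₀ k‖ₑ * ‖w₁ k‖ₑ) := by gcongr with k; exact hw k
    _ = ∑' k, ‖a k * w₀ k‖ₑ * ‖f k * w₁ k‖ₑ := by simp only [enorm_mul]; congr 1 with k; ring

theorem stmt5_general (d : ℕ) (p p' : ℝ≥0∞) (hp : 0 < p)
    (hp'1 : p ≤ 1 → p' = ∞)
    (hp'2 : 1 < p → p ≠ ∞ → 1 / p + 1 / p' = 1)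
    (hp'3 : p = ∞ → p' = 1)
    (ω₁ ω₂ : (Fin d → ℤ) → ℝ) (ω₀ : (Fin d → ℤ) → (Fin d → ℤ) → ℝ)
    (hω₁ : ∀ j, 0 < ω₁ j) (hω₂ : ∀ j, 0 < ω₂ j)
    (hw : ∀ j k, ω₂ j / ω₁ k ≤ ω₀ j k)
    (a : (Fin d → ℤ) → (Fin d → ℤ) → ℂ)
    (f : (Fin d → ℤ) → ℂ) :
    eLpNorm (fun j => (∑' k, a j k * f k) * (ω₂ j : ℂ)) p Measure.count ≤
      eLpNorm (fun jk : (Fin d → ℤ) × (Fin d → ℤ) =>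
        a jk.1 jk.2 * (ω₀ jk.1 jk.2 : ℂ)) p Measure.count *
      eLpNorm (fun k => f k * (ω₁ k : ℂ)) p' Measure.count := by
  have hweight (j k) : ‖(ω₂ j : ℂ)‖ₑ ≤ ‖(ω₀ j k : ℂ)‖ₑ * ‖(ω₁ k : ℂ)‖ₑ := by
    have hle : ω₂ j ≤ ω₀ j k * ω₁ k := (div_le_iff₀ (hω₁ k)).1 (hw j k)
    rw [← enorm_mul, ← Complex.ofReal_mul, ← ofReal_norm, ← ofReal_norm, Complex.norm_real,
      Complex.norm_real, Real.norm_eq_abs, Real.norm_eq_abs]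
    exact ENNReal.ofReal_le_ofReal (abs_le_abs_of_nonneg (hω₂ j).le hle)
  calc eLpNorm (fun j => (∑' k, a j k * f k) * (ω₂ j : ℂ)) p Measure.count
      ≤ eLpNorm (fun j => ∑' k, ‖a j k * ω₀ j k‖ₑ * ‖f k * ω₁ k‖ₑ) p Measure.count :=
        eLpNorm_mono_enorm fun j => by
          simpa only [enorm_eq_self] using enorm_tsum_mul_mul_le _ _ _ _ _ (hweight j)
    _ ≤ _ := eLpNorm_count_tsum_enorm_mul_le hp hp'1 hp'2 hp'3 (fun j k => a j k * ω₀ j k) _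

/-- if `A ∈ U^p(ω₀, ℤ^d)` and `ω₂(j)/ω₁(k) ≤ ω₀(j,k)`, then `A` is
bounded from `ℓ^{p'}_{(ω₁)}` to `ℓ^p_{(ω₂)}` with operator quasi-norm at most
`‖A‖_{U^p(ω₀)}`, where `p'` is the extended conjugate exponent (`p' = ∞` for `p ≤ 1`).
The `U^p` quasi-norm is the `ℓ^p` norm of `a·ω₀` over `ℤ^d × ℤ^d`, realized via
`eLpNorm` w.r.t. counting measure (so that `p = ∞` is included). -/
theorem stmt5 (d : ℕ) (p p' : ℝ≥0∞) (hp : 0 < p)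
    (hp'1 : p ≤ 1 → p' = ∞)
    (hp'2 : 1 < p → p ≠ ∞ → 1 / p + 1 / p' = 1)
    (hp'3 : p = ∞ → p' = 1)
    (ω₁ ω₂ : (Fin d → ℤ) → ℝ) (ω₀ : (Fin d → ℤ) → (Fin d → ℤ) → ℝ)
    (hω₁ : ∀ j, 0 < ω₁ j) (hω₂ : ∀ j, 0 < ω₂ j) (hω₀ : ∀ j k, 0 < ω₀ j k)
    (hw : ∀ j k, ω₂ j / ω₁ k ≤ ω₀ j k)
    (a : (Fin d → ℤ) → (Fin d → ℤ) → ℂ)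
    (hA : eLpNorm (fun jk : (Fin d → ℤ) × (Fin d → ℤ) =>
      a jk.1 jk.2 * (ω₀ jk.1 jk.2 : ℂ)) p Measure.count < ∞)
    (f : (Fin d → ℤ) → ℂ)
    (hf : MemLp (fun k => f k * (ω₁ k : ℂ)) p' Measure.count) :
    eLpNorm (fun j => (∑' k, a j k * f k) * (ω₂ j : ℂ)) p Measure.count ≤
      eLpNorm (fun jk : (Fin d → ℤ) × (Fin d → ℤ) =>
        a jk.1 jk.2 * (ω₀ jk.1 jk.2 : ℂ)) p Measure.count *
      eLpNorm (fun k => f k * (ω₁ k : ℂ)) p' Measure.count :=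
  stmt5_general d p p' hp hp'1 hp'2 hp'3 ω₁ ω₂ ω₀ hω₁ hω₂ hw a f
end
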